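/- arXiv:2001.08052 — 5 statements merged into one kernel-verified Lean document; each statement's English description precedes it below -/
import Mathlib

section
/- Let G be cyclic of order p, k a field of characteristic p, V and W kG-modules with W indecomposable of dimension n with basis w_1,…,w_n on which σ·w_i = Σ_{j=1}^{i} (-1)^{i-j} w_j. If f ∈ k[V] has weight d ≤ n (i.e., d is the smallest positive integer with Δ^d(f) = 0), then Σ_{j=1}^{d} Δ^{j-1}(f) ⊗ w_j is a G-invariant element of k[V] ⊗ W. -/
open MvPolynomial TensorProduct

/-- Index type for the variables of `k[V]` where `V = ⊕_{j<m} V_{nj j}`. -/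
abbrev Idx (m : ℕ) (nj : Fin m → ℕ) := Σ j : Fin m, Fin (nj j)

/-- The action of the generator σ on `k[V]`:
`σ (x_{i,j}) = x_{i,j} + x_{i+1,j}` (and `σ` fixes the last variable of each block). -/
noncomputable def sigmaAct (k : Type*) [CommRing k] {m : ℕ} (nj : Fin m → ℕ) :
    MvPolynomial (Idx m nj) k →ₐ[k] MvPolynomial (Idx m nj) k :=
  aeval (fun v => X v + if h : v.2.1 + 1 < nj v.1 then X ⟨v.1, ⟨v.2.1 + 1, h⟩⟩ else 0)

/-- Δ = σ - 1 as a `k`-linear endomorphism of `k[V]`. -/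
noncomputable def Del (k : Type*) [CommRing k] {m : ℕ} (nj : Fin m → ℕ) :
    MvPolynomial (Idx m nj) k →ₗ[k] MvPolynomial (Idx m nj) k :=
  (sigmaAct k nj).toLinearMap - LinearMap.id

/-- The ring of invariants `k[V]^G` (fixed points of the generator σ). -/
noncomputable def invar (k : Type*) [CommRing k] {m : ℕ} (nj : Fin m → ℕ) :
    Subalgebra k (MvPolynomial (Idx m nj) k) :=
  AlgHom.equalizer (sigmaAct k nj) (AlgHom.id k _)

/-- Matrix of σ on the indecomposable module `W = V_n` in the basis `w_1,…,w_n`,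
with `σ • w_i = ∑_{j ≤ i} (-1)^{i-j} w_j`. -/
def sigmaWMat (k : Type*) [CommRing k] (n : ℕ) : Matrix (Fin n) (Fin n) k :=
  fun a b => if a ≤ b then (-1 : k) ^ ((b : ℕ) - (a : ℕ)) else 0

/-- σ acting on `W = V_n`. -/
noncomputable def sigmaW (k : Type*) [CommRing k] (n : ℕ) : (Fin n → k) →ₗ[k] (Fin n → k) :=
  Matrix.toLin' (sigmaWMat k n)

/-- σ acting diagonally on `k[V] ⊗ W`. -/
noncomputable def sigmaCov (k : Type*) [CommRing k] {m : ℕ} (nj : Fin m → ℕ) (n : ℕ) :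
    (MvPolynomial (Idx m nj) k ⊗[k] (Fin n → k)) →ₗ[k]
      (MvPolynomial (Idx m nj) k ⊗[k] (Fin n → k)) :=
  TensorProduct.map (sigmaAct k nj).toLinearMap (sigmaW k n)

/-- A covariant is a `G`-invariant element of `k[V] ⊗ W`. -/
def IsCovariant (k : Type*) [CommRing k] {m : ℕ} (nj : Fin m → ℕ) {n : ℕ}
    (h : MvPolynomial (Idx m nj) k ⊗[k] (Fin n → k)) : Prop :=
  sigmaCov k nj n h = h

/-- Elements of `k[V] ⊗ W` which are homogeneous of degree `d`. -/
def tensorHomog (k : Type*) [CommRing k] {m : ℕ} (nj : Fin m → ℕ) (n : ℕ) (d : ℕ) :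
    Set (MvPolynomial (Idx m nj) k ⊗[k] (Fin n → k)) :=
  {x | x ∈ Submodule.span k
    {y | ∃ f w, MvPolynomial.IsHomogeneous f d ∧ y = f ⊗ₜ[k] w}}


/-- `h` is decomposable: it lies in `k[V]^G_+ ⋅ (k[V] ⊗ W)^G`. -/
def IsDecomposableCov (k : Type*) [CommRing k] {m : ℕ} (nj : Fin m → ℕ) (n : ℕ)
    (h : MvPolynomial (Idx m nj) k ⊗[k] (Fin n → k)) : Prop :=
  h ∈ Submodule.span k
    {y | ∃ q x, q ∈ invar k nj ∧ (∃ e, 0 < e ∧ MvPolynomial.IsHomogeneous q e) ∧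
      IsCovariant k nj x ∧ y = q • x}

/-- A transfer covariant: `Δ^k(f) w_1 + Δ^{k+1}(f) w_2 + ⋯ + Δ^{p-1}(f) w_s`. -/
noncomputable def transferCov (k : Type*) [CommRing k] {m : ℕ} (nj : Fin m → ℕ) (n : ℕ)
    (p s : ℕ) (f : MvPolynomial (Idx m nj) k) :
    MvPolynomial (Idx m nj) k ⊗[k] (Fin n → k) :=
  ∑ i : Fin n, (if (i : ℕ) < s then ((Del k nj) ^ (p - s + (i : ℕ))) f else 0) ⊗ₜ[k]
    Pi.single i 1

def IsTransferCovariant (k : Type*) [CommRing k] {m : ℕ} (nj : Fin m → ℕ) (n : ℕ) (p : ℕ)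
    (h : MvPolynomial (Idx m nj) k ⊗[k] (Fin n → k)) : Prop :=
  ∃ f s, 0 < s ∧ s ≤ n ∧ s ≤ p ∧ h = transferCov k nj n p s f

/-- The module of covariants is generated over `k[V]^G` in degrees ≤ d. -/
def CovGenLE (k : Type*) [CommRing k] {m : ℕ} (nj : Fin m → ℕ) (n : ℕ) (d : ℕ) : Prop :=
  ∀ x, IsCovariant k nj x → x ∈ Submodule.span k
    {y | ∃ q z, q ∈ invar k nj ∧ IsCovariant k nj z ∧
      (∃ e ≤ d, z ∈ tensorHomog k nj n e) ∧ y = q • z}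

/-- `k[V]` is generated as a `k[V]^G`-module in degrees ≤ d. -/
def PolyGenLE (k : Type*) [CommRing k] {m : ℕ} (nj : Fin m → ℕ) (d : ℕ) : Prop :=
  ∀ f : MvPolynomial (Idx m nj) k, f ∈ Submodule.span k
    {y | ∃ q g, q ∈ invar k nj ∧ (∃ e ≤ d, MvPolynomial.IsHomogeneous g e) ∧ y = q * g}

/-- `k[V]^G` is generated as a `k`-algebra in degrees ≤ d. -/
def AlgGenLE (k : Type*) [CommRing k] {m : ℕ} (nj : Fin m → ℕ) (d : ℕ) : Prop :=
  ∀ f ∈ invar k nj, f ∈ Algebra.adjoin k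
    {g | g ∈ invar k nj ∧ ∃ e ≤ d, MvPolynomial.IsHomogeneous g e}

/-- Noether bound of the module of covariants over `k[V]^G`. -/
noncomputable def betaCov (k : Type*) [CommRing k] {m : ℕ} (nj : Fin m → ℕ) (n : ℕ) : ℕ :=
  sInf {d | CovGenLE k nj n d}

noncomputable def betaPolyMod (k : Type*) [CommRing k] {m : ℕ} (nj : Fin m → ℕ) : ℕ :=
  sInf {d | PolyGenLE k nj d}

noncomputable def betaAlg (k : Type*) [CommRing k] {m : ℕ} (nj : Fin m → ℕ) : ℕ :=
  sInf {d | AlgGenLE k nj d}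

/-- The norm `N_j = ∏_{i=0}^{p-1} σ^i (x_{1,j})`. -/
noncomputable def normJ (k : Type*) [CommRing k] {m : ℕ} (nj : Fin m → ℕ) (p : ℕ)
    (j : Fin m) (h0 : 0 < nj j) : MvPolynomial (Idx m nj) k :=
  ∏ i ∈ Finset.range p, (sigmaAct k nj)^[i] (X ⟨j, ⟨0, h0⟩⟩)

/-!
On `k[V]` the generator acts as `σ = 1 + Δ`, and on `W` its matrix has entries `(-1)^(b-a)` above
the diagonal. Hence the `w_a`-coefficient of `σ` applied to `∑ Δ^i f ⊗ w_i` is the alternating sum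
`∑_{i ≥ a} (-1)^(i-a) (Δ^i f + Δ^(i+1) f)`, which telescopes to `Δ^a f` once `Δ^n f = 0`.
Since `Δ^d f = 0` with `d ≤ n`, the truncation at `d` in the statement changes nothing.
-/

open Finset

theorem TensorProduct.map_toLin'_sum_tmul_single {R A B ι κ : Type*} [CommRing R]
    [AddCommGroup A] [Module R A] [AddCommGroup B] [Module R B]
    [Fintype ι] [DecidableEq ι] [Fintype κ] [DecidableEq κ]
    (φ : A →ₗ[R] B) (M : Matrix κ ι R) (g : ι → A) :
    map φ (Matrix.toLin' M) (∑ i, g i ⊗ₜ[R] (Pi.single i 1 : ι → R)) =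
      ∑ a, (∑ i, M a i • φ (g i)) ⊗ₜ[R] (Pi.single a 1 : κ → R) := by
  have hcol : ∀ i, Matrix.toLin' M (Pi.single i 1) = ∑ a, M a i • (Pi.single a 1 : κ → R) := by
    intro i
    ext a
    simp [Matrix.toLin'_apply, Matrix.mulVec_single, Pi.single_apply]
  simp only [map_sum, map_tmul, hcol, tmul_sum, tmul_smul, ← smul_tmul', sum_tmul]
  exact sum_comm

section Telescoping

variable {R A : Type*} [CommRing R] [AddCommGroup A] [Module R A]

theorem sum_range_neg_one_pow_smul_pow_add_pow_succ (Δ : Module.End R A) (x : A) (r : ℕ) :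
    ∑ j ∈ range r, (-1 : R) ^ j • ((Δ ^ j) x + (Δ ^ (j + 1)) x) = x - (-1 : R) ^ r • (Δ ^ r) x := by
  have hstep : ∀ j, (-1 : R) ^ j • ((Δ ^ j) x + (Δ ^ (j + 1)) x) =
      (-1 : R) ^ j • (Δ ^ j) x - (-1 : R) ^ (j + 1) • (Δ ^ (j + 1)) x := by
    intro j
    rw [pow_succ (-1 : R) j, mul_neg_one, neg_smul, sub_neg_eq_add, smul_add]
  simp only [hstep, sum_range_sub', pow_zero, one_smul, Module.End.one_apply]

theorem sum_sigmaWMat_smul_pow_add_pow_succ (Δ : Module.End R A) {n : ℕ} {x : A}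
    (hx : (Δ ^ n) x = 0) (a : Fin n) :
    ∑ i : Fin n, sigmaWMat R n a i • ((Δ ^ (i : ℕ)) x + (Δ ^ ((i : ℕ) + 1)) x) = (Δ ^ (a : ℕ)) x := by
  obtain ⟨r, hr⟩ : ∃ r, n = a + r := ⟨n - a, by omega⟩
  have hshift : ∀ j, (Δ ^ (a + j)) x = (Δ ^ j) ((Δ ^ (a : ℕ)) x) := by
    intro j
    rw [add_comm, pow_add, Module.End.mul_apply]
  calc ∑ i : Fin n, sigmaWMat R n a i • ((Δ ^ (i : ℕ)) x + (Δ ^ ((i : ℕ) + 1)) x)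
      = ∑ j ∈ range n, if (a : ℕ) ≤ j then
          (-1 : R) ^ (j - a) • ((Δ ^ j) x + (Δ ^ (j + 1)) x) else 0 := by
        rw [← Fin.sum_univ_eq_sum_range]
        refine sum_congr rfl fun i _ => ?_
        simp only [sigmaWMat, Fin.le_def]
        split_ifs <;> simp
    _ = ∑ j ∈ range r,
          (-1 : R) ^ j • ((Δ ^ j) ((Δ ^ (a : ℕ)) x) + (Δ ^ (j + 1)) ((Δ ^ (a : ℕ)) x)) := by
        rw [show range n = range (a + r) by rw [← hr], sum_range_add,
          sum_eq_zero fun j hj => if_neg (by simpa using hj), zero_add]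
        refine sum_congr rfl fun j _ => ?_
        rw [if_pos (Nat.le_add_right _ _), Nat.add_sub_cancel_left, ← hshift, ← hshift, add_assoc]
    _ = (Δ ^ (a : ℕ)) x := by
        rw [sum_range_neg_one_pow_smul_pow_add_pow_succ, ← hshift, ← hr, hx, smul_zero, sub_zero]

theorem map_sigmaW_sum_pow_tmul_single (σ : Module.End R A) {n : ℕ} {x : A}
    (hx : ((σ - 1) ^ n) x = 0) :
    TensorProduct.map σ (sigmaW R n)
        (∑ i : Fin n, ((σ - 1) ^ (i : ℕ)) x ⊗ₜ[R] (Pi.single i 1 : Fin n → R)) =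
      ∑ i : Fin n, ((σ - 1) ^ (i : ℕ)) x ⊗ₜ[R] (Pi.single i 1 : Fin n → R) := by
  have hσ : ∀ y, σ y = y + (σ - 1) y := fun y => by simp
  rw [sigmaW, TensorProduct.map_toLin'_sum_tmul_single]
  refine sum_congr rfl fun a _ => ?_
  simp only [hσ, ← Module.End.mul_apply, ← pow_succ',
    sum_sigmaWMat_smul_pow_add_pow_succ (σ - 1) hx]

end Telescoping

theorem stmt3_general (k : Type*) [Field k]
    {m : ℕ} (nj : Fin m → ℕ)
    (n : ℕ)
    (f : MvPolynomial (Idx m nj) k) (d : ℕ)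
    (hdker : ((Del k nj) ^ d) f = 0)
    (hdn : d ≤ n) :
    IsCovariant k nj
      (∑ i : Fin n,
        (if (i : ℕ) < d then ((Del k nj) ^ (i : ℕ)) f else 0) ⊗ₜ[k]
          (Pi.single i 1 : Fin n → k)) := by
  have htrunc : ∀ i : ℕ, (if i < d then ((Del k nj) ^ i) f else 0) = ((Del k nj) ^ i) f :=
    fun i => ite_eq_left_iff.mpr fun hi =>
      (Module.End.pow_map_zero_of_le (not_lt.mp hi) hdker).symm
  simp only [htrunc]
  exact map_sigmaW_sum_pow_tmul_single (sigmaAct k nj).toLinearMap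
    (Module.End.pow_map_zero_of_le hdn hdker)

/-- Elmer, Prop. 3, first half. If `f ∈ k[V]` has weight `d ≤ n`
(i.e. `d` is the smallest positive integer with `Δ^d f = 0`), then
`∑_{j=1}^d Δ^{j-1}(f) ⊗ w_j` is a `G`-invariant element of `k[V] ⊗ W`. -/
theorem stmt3 (p : ℕ) (hp : p.Prime) (k : Type*) [Field k] [CharP k p]
    {m : ℕ} (nj : Fin m → ℕ) (hnj : ∀ j, 1 ≤ nj j ∧ nj j ≤ p)
    (n : ℕ) (hn : 1 ≤ n) (hnp : n ≤ p)
    (f : MvPolynomial (Idx m nj) k) (d : ℕ) (hd0 : 0 < d)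
    (hdker : ((Del k nj) ^ d) f = 0)
    (hdmin : ∀ e, 0 < e → ((Del k nj) ^ e) f = 0 → d ≤ e)
    (hdn : d ≤ n) :
    IsCovariant k nj
      (∑ i : Fin n,
        (if (i : ℕ) < d then ((Del k nj) ^ (i : ℕ)) f else 0) ⊗ₜ[k]
          (Pi.single i 1 : Fin n → k)) :=
  stmt3_general k nj n f d hdker hdn
end

section
/- Let G be cyclic of order p, k a field of characteristic p, V a kG-module and W an indecomposable kG-module of dimension n with basis w_1,…,w_n on which σ·w_i = Σ_{j=1}^{i} (-1)^{i-j} w_j. If f_1 w_1 + f_2 w_2 + ⋯ + f_n w_n ∈ (k[V] ⊗ W)^G, then there exists f ∈ k[V] with weight at most n such that f_j = Δ^{j-1}(f) for all 1 ≤ j ≤ n. -/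
open MvPolynomial TensorProduct

/-- Elmer, Prop. 3, second half. If `∑ f_i ⊗ w_i` is a covariant,
then there is `f ∈ k[V]` of weight at most `n` (i.e. `Δ^n f = 0`) with
`f_j = Δ^{j-1}(f)` for all `j`. -/
theorem stmt4 (p : ℕ) (hp : p.Prime) (k : Type*) [Field k] [CharP k p]
    {m : ℕ} (nj : Fin m → ℕ) (hnj : ∀ j, 1 ≤ nj j ∧ nj j ≤ p)
    (n : ℕ) (hn : 1 ≤ n) (hnp : n ≤ p)
    (f : Fin n → MvPolynomial (Idx m nj) k)
    (hcov : IsCovariant k nj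
      (∑ i : Fin n, (f i) ⊗ₜ[k] (Pi.single i 1 : Fin n → k))) :
    ∃ g : MvPolynomial (Idx m nj) k,
      ((Del k nj) ^ n) g = 0 ∧ ∀ i : Fin n, f i = ((Del k nj) ^ (i : ℕ)) g := by
  classical
  -- Step 1: extract coordinates from the covariance condition.
  have key : ∀ a : Fin n,
      (∑ i : Fin n, sigmaWMat k n a i • (sigmaAct k nj) (f i)) = f a := by
    intro a
    have h := congrArg
      (((TensorProduct.rid k (MvPolynomial (Idx m nj) k)).toLinearMap ∘ₗ
        TensorProduct.map LinearMap.id (LinearMap.proj a)) :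
        (MvPolynomial (Idx m nj) k ⊗[k] (Fin n → k)) →ₗ[k] _) hcov
    simpa [sigmaCov, sigmaW, map_sum, TensorProduct.map_tmul,
      Matrix.toLin'_apply, Matrix.mulVec_single, Pi.single_apply,
      Finset.sum_ite_eq'] using h
  -- Extended family
  set F : ℕ → MvPolynomial (Idx m nj) k :=
    fun a => if h : a < n then f ⟨a, h⟩ else 0 with hF
  have keyext : ∀ a : ℕ,
      (∑ i : Fin n, (if a ≤ (i : ℕ) then ((-1 : k)) ^ ((i : ℕ) - a) else 0) •
        (sigmaAct k nj) (f i)) = F a := by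
    intro a
    by_cases h : a < n
    · have := key ⟨a, h⟩
      simp only [hF, dif_pos h]
      rw [← this]
      refine Finset.sum_congr rfl fun i _ => ?_
      simp [sigmaWMat, Fin.le_def]
    · simp only [hF, dif_neg h]
      rw [Finset.sum_eq_zero]
      intro i _
      rw [if_neg, zero_smul]
      omega
  have rec1 : ∀ a : ℕ, Del k nj (F a) = F (a + 1) := by
    intro a
    by_cases h : a < n
    · have h1 := keyext a
      have h2 := keyext (a + 1)
      have hsum : F a + F (a + 1) = (sigmaAct k nj) (f ⟨a, h⟩) := by
        rw [← h1, ← h2, ← Finset.sum_add_distrib]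
        have : ∀ i : Fin n,
            (if a ≤ (i : ℕ) then ((-1 : k)) ^ ((i : ℕ) - a) else 0) •
              (sigmaAct k nj) (f i) +
            (if a + 1 ≤ (i : ℕ) then ((-1 : k)) ^ ((i : ℕ) - (a + 1)) else 0) •
              (sigmaAct k nj) (f i) =
            (if (i : ℕ) = a then (1 : k) else 0) • (sigmaAct k nj) (f i) := by
          intro i
          rcases lt_trichotomy (i : ℕ) a with hlt | heq | hgt
          · rw [if_neg (by omega), if_neg (by omega), if_neg (by omega)]
            simp
          · rw [if_pos (by omega), if_neg (by omega), if_pos heq]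
            simp [heq]
          · rw [if_pos (by omega), if_pos (by omega), if_neg (by omega),
              ← add_smul]
            have he : (i : ℕ) - a = ((i : ℕ) - (a + 1)) + 1 := by omega
            rw [he, pow_succ]
            have hz : ((-1 : k)) ^ ((i : ℕ) - (a + 1)) * -1 +
                ((-1 : k)) ^ ((i : ℕ) - (a + 1)) = 0 := by ring
            rw [hz]
        rw [Finset.sum_congr rfl fun i _ => this i]
        have hcond : ∀ i : Fin n, ((i : ℕ) = a) ↔ (i = ⟨a, h⟩) := by
          intro i; constructor
          · intro hi; exact Fin.ext hi
          · intro hi; rw [hi]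
        rw [Finset.sum_congr rfl fun i _ => by rw [if_congr (hcond i) rfl rfl]]
        simp only [ite_smul, one_smul, zero_smul]
        rw [Finset.sum_ite_eq' Finset.univ (⟨a, h⟩ : Fin n)]
        simp
      have hFa : F a = f ⟨a, h⟩ := by simp [hF, dif_pos h]
      have hDel : Del k nj (F a) = (sigmaAct k nj) (F a) - F a := by
        simp [Del]
      rw [hDel, hFa, ← hsum, hFa]
      ring
    · have h0 : F a = 0 := by simp [hF, dif_neg h]
      have h1 : F (a + 1) = 0 := by
        simp only [hF]; rw [dif_neg (by omega)]
      rw [h0, h1, map_zero]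
  have pow : ∀ a : ℕ, ((Del k nj) ^ a) (F 0) = F a := by
    intro a
    induction a with
    | zero => simp
    | succ a ih => rw [pow_succ', Module.End.mul_apply, ih, rec1]
  refine ⟨F 0, ?_, ?_⟩
  · rw [pow n]; simp [hF]
  · intro i
    rw [pow (i : ℕ)]
    simp [hF, i.isLt]
end

section
/- Let G be cyclic of order p, k a field of characteristic p, V and W kG-modules with W indecomposable with the standard basis w_1,…,w_n. Suppose k[V] is generated as a module over k[V]^G by homogeneous elements of degree at most γ. Then every transfer covariant h = Δ^k(f) w_1 + Δ^{k+1}(f) w_2 + ⋯ + Δ^{p-1}(f) w_s of degree > γ (with f ∈ k[V] homogeneous) lies in k[V]^G_+·(k[V] ⊗ W)^G, i.e., h is decomposable as a covariant. -/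
open MvPolynomial TensorProduct

/-!
In characteristic `p` we have `Δ^p = σ^p - 1 = 0`, so `σ (Δ^j g) = Δ^j g + Δ^(j+1) g` makes every
`transferCov g` a covariant; and since `Δ` commutes with multiplication by invariants,
`g ↦ transferCov g` is `k[V]^G`-linear. Write `f = ∑ qᵢ gᵢ` with `qᵢ` invariant and `gᵢ`
homogeneous of degree `eᵢ ≤ γ`. Taking degree-`D` parts, `f = ∑ (qᵢ)_{D - eᵢ} gᵢ`, and the
homogeneous components `(qᵢ)_{D - eᵢ}` are again invariant, of positive degree as `D > γ`. Hence
`transferCov f = ∑ (qᵢ)_{D - eᵢ} • transferCov gᵢ` is decomposable.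
-/

theorem MvPolynomial.homogeneousComponent_add_map_of_isHomogeneous {σ R : Type*}
    [CommSemiring R] (φ : MvPolynomial σ R →ₗ[R] MvPolynomial σ R) {e : ℕ}
    (hφ : ∀ i (q : MvPolynomial σ R), q.IsHomogeneous i → (φ q).IsHomogeneous (i + e))
    (d : ℕ) (q : MvPolynomial σ R) :
    homogeneousComponent (d + e) (φ q) = φ (homogeneousComponent d q) := by
  conv_lhs => rw [← sum_homogeneousComponent q]
  have hterm : ∀ i ∈ Finset.range (q.totalDegree + 1),
      homogeneousComponent (d + e) (φ (homogeneousComponent i q)) =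
        if d = i then φ (homogeneousComponent i q) else 0 := by
    intro i _
    rw [homogeneousComponent_of_mem (hφ i _ (homogeneousComponent_isHomogeneous i q))]
    simp only [Nat.add_right_cancel_iff]
  rw [map_sum, map_sum, Finset.sum_congr rfl hterm, Finset.sum_ite_eq]
  split_ifs with hd
  · rfl
  · rw [homogeneousComponent_eq_zero _ _ (by simpa using hd), map_zero]

theorem MvPolynomial.homogeneousComponent_add_mul_of_isHomogeneous {σ R : Type*}
    [CommSemiring R] {g : MvPolynomial σ R} {e : ℕ} (hg : g.IsHomogeneous e) (d : ℕ)
    (q : MvPolynomial σ R) :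
    homogeneousComponent (d + e) (q * g) = homogeneousComponent d q * g :=
  homogeneousComponent_add_map_of_isHomogeneous (LinearMap.mulRight R g)
    (fun _ _ hq => hq.mul hg) d q

theorem sum_range_ite_neg_one_pow_smul_add_succ {R M : Type*} [CommRing R] [AddCommGroup M]
    [Module R M] (h : ℕ → M) {a n : ℕ} (ha : a ≤ n) :
    ∑ i ∈ Finset.range n, (if a ≤ i then (-1 : R) ^ (i - a) else 0) • (h i + h (i + 1)) =
      h a - (-1 : R) ^ (n - a) • h n := by
  induction n, ha using Nat.le_induction with
  | base =>
    rw [Finset.sum_eq_zero fun i hi => by rw [if_neg (by simpa using hi), zero_smul]]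
    simp
  | succ n han ih =>
    rw [Finset.sum_range_succ, ih, if_pos han, Nat.succ_sub han, pow_succ]
    module

section Action

variable {k : Type*} [CommRing k] {m : ℕ} {nj : Fin m → ℕ}

theorem sigmaAct_X (v : Idx m nj) :
    sigmaAct k nj (X v) =
      X v + if h : v.2.1 + 1 < nj v.1 then X ⟨v.1, ⟨v.2.1 + 1, h⟩⟩ else 0 :=
  aeval_X _ v

theorem Del_X (v : Idx m nj) :
    Del k nj (X v) = if h : v.2.1 + 1 < nj v.1 then X ⟨v.1, ⟨v.2.1 + 1, h⟩⟩ else 0 := by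
  simp only [Del, LinearMap.sub_apply, AlgHom.toLinearMap_apply, LinearMap.id_apply,
    sigmaAct_X, add_sub_cancel_left]

theorem Del_pow_X_eq_zero (r : ℕ) (v : Idx m nj) (hv : nj v.1 ≤ v.2.1 + r) :
    (Del k nj ^ r) (X v) = 0 := by
  induction r generalizing v with
  | zero => have := v.2.2; omega
  | succ r ih =>
    rw [pow_succ, Module.End.mul_apply, Del_X]
    split_ifs with h
    · exact ih _ (by simp only; omega)
    · exact map_zero _

theorem sigmaAct_toLinearMap_eq : (sigmaAct k nj).toLinearMap = Del k nj + 1 := by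
  rw [Del, Module.End.one_eq_id, sub_add_cancel]

theorem charP_end_mvPolynomial (σ : Type*) (p : ℕ) [CharP k p] :
    CharP (Module.End k (MvPolynomial σ k)) p :=
  charP_of_injective_algebraMap (fun a b hab =>
    C_injective σ k (by simpa [smul_eq_C_mul] using LinearMap.congr_fun hab 1)) p

theorem sigmaAct_pow_eq_one {p : ℕ} [CharP k p] (hp : p.Prime) (hnj : ∀ j, nj j ≤ p) :
    sigmaAct k nj ^ p = 1 := by
  have : Fact p.Prime := ⟨hp⟩
  have := charP_end_mvPolynomial (k := k) (Idx m nj) p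
  have hlin : (sigmaAct k nj).toLinearMap ^ p = Del k nj ^ p + 1 := by
    rw [sigmaAct_toLinearMap_eq, add_pow_char_of_commute _ (Commute.one_right _), one_pow]
  refine algHom_ext fun v => ?_
  have hv : (sigmaAct k nj ^ p) (X v) = (Del k nj ^ p + 1) (X v) := by
    rw [← AlgHom.toLinearMap_apply, ← AlgHom.toEnd_apply, map_pow, AlgHom.toEnd_apply, hlin]
  rw [hv, LinearMap.add_apply, Del_pow_X_eq_zero p v (by have := hnj v.1; omega), zero_add]
  rfl

theorem Del_pow_eq_zero {p : ℕ} [CharP k p] (hp : p.Prime) (hnj : ∀ j, nj j ≤ p) :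
    Del k nj ^ p = 0 := by
  have : Fact p.Prime := ⟨hp⟩
  have := charP_end_mvPolynomial (k := k) (Idx m nj) p
  rw [Del, ← Module.End.one_eq_id, sub_pow_char_of_commute _ (Commute.one_right _), one_pow,
    ← AlgHom.toEnd_apply, ← map_pow, sigmaAct_pow_eq_one hp hnj, map_one, sub_self]

end Action

section Invariants

variable {k : Type*} [CommRing k] {m : ℕ} {nj : Fin m → ℕ}

theorem mem_invar_iff {q : MvPolynomial (Idx m nj) k} : q ∈ invar k nj ↔ sigmaAct k nj q = q :=
  AlgHom.mem_equalizer (sigmaAct k nj) (AlgHom.id k _) q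

theorem Del_mul_of_mem_invar {q : MvPolynomial (Idx m nj) k} (hq : q ∈ invar k nj)
    (g : MvPolynomial (Idx m nj) k) : Del k nj (q * g) = q * Del k nj g := by
  simp only [Del, LinearMap.sub_apply, AlgHom.toLinearMap_apply, LinearMap.id_apply, map_mul,
    mem_invar_iff.mp hq, mul_sub]

theorem Del_pow_mul_of_mem_invar {q : MvPolynomial (Idx m nj) k} (hq : q ∈ invar k nj)
    (r : ℕ) (g : MvPolynomial (Idx m nj) k) :
    (Del k nj ^ r) (q * g) = q * (Del k nj ^ r) g := by
  induction r with
  | zero => rfl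
  | succ r ih => rw [pow_succ', Module.End.mul_apply, ih, Del_mul_of_mem_invar hq]; rfl

theorem sigmaAct_isHomogeneous {q : MvPolynomial (Idx m nj) k} {d : ℕ}
    (hq : q.IsHomogeneous d) : (sigmaAct k nj q).IsHomogeneous d := by
  rw [sigmaAct, ← one_mul d]
  refine hq.aeval _ fun v => ?_
  split_ifs
  · exact (isHomogeneous_X _ _).add (isHomogeneous_X _ _)
  · simpa using isHomogeneous_X k v

theorem homogeneousComponent_mem_invar {q : MvPolynomial (Idx m nj) k} (hq : q ∈ invar k nj)
    (d : ℕ) : homogeneousComponent d q ∈ invar k nj := by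
  rw [mem_invar_iff]
  conv_rhs => rw [← mem_invar_iff.mp hq]
  exact (homogeneousComponent_add_map_of_isHomogeneous (e := 0) (sigmaAct k nj).toLinearMap
    (fun _ _ => sigmaAct_isHomogeneous) d q).symm

end Invariants

section Covariants

variable {k : Type*} [CommRing k] {m : ℕ} {nj : Fin m → ℕ}

theorem sigmaW_single (n : ℕ) (i : Fin n) :
    sigmaW k n (Pi.single i 1) = ∑ a : Fin n, sigmaWMat k n a i • Pi.single a 1 := by
  ext b
  simp [sigmaW, Matrix.toLin'_apply, Matrix.mulVec, dotProduct, Pi.single_apply]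

/-- The `wₐ`-coefficient of the image is `∑_{i ≥ a} (-1)^(i-a) (hᵢ + hᵢ₊₁)`, which telescopes
to `hₐ`. -/
theorem map_sigmaW_sum_tmul_single {M : Type*} [AddCommGroup M] [Module k M] (S : M →ₗ[k] M)
    {n : ℕ} (h : ℕ → M) (hS : ∀ i, S (h i) = h i + h (i + 1)) (hn : h n = 0) :
    TensorProduct.map S (sigmaW k n) (∑ i : Fin n, h i ⊗ₜ Pi.single i 1) =
      ∑ i : Fin n, h i ⊗ₜ Pi.single i 1 := by
  simp only [map_sum, map_tmul, sigmaW_single, tmul_sum, tmul_smul, smul_tmul']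
  rw [Finset.sum_comm]
  refine Finset.sum_congr rfl fun a _ => ?_
  rw [← sum_tmul]
  congr 1
  simp only [sigmaWMat, Fin.le_iff_val_le_val, hS]
  rw [Fin.sum_univ_eq_sum_range (fun i => (if (a : ℕ) ≤ i then (-1 : k) ^ (i - a) else 0) •
    (h i + h (i + 1))) n, sum_range_ite_neg_one_pow_smul_add_succ h a.2.le, hn, smul_zero,
    sub_zero]

theorem transferCov_isCovariant {n p s : ℕ} (hΔ : Del k nj ^ p = 0) (hsn : s ≤ n)
    (hsp : s ≤ p) (g : MvPolynomial (Idx m nj) k) :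
    IsCovariant k nj (transferCov k nj n p s g) := by
  have hshift : ∀ i, Del k nj (if i < s then (Del k nj ^ (p - s + i)) g else 0) =
      if i + 1 < s then (Del k nj ^ (p - s + (i + 1))) g else 0 := by
    intro i
    rcases lt_trichotomy (i + 1) s with hi | hi | hi
    · rw [if_pos (by omega), if_pos hi, ← Module.End.mul_apply, ← pow_succ', add_assoc]
    · rw [if_pos (by omega), if_neg (by omega), ← Module.End.mul_apply, ← pow_succ',
        show p - s + i + 1 = p by omega, hΔ, LinearMap.zero_apply]
    · rw [if_neg (by omega), if_neg (by omega), map_zero]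
  refine map_sigmaW_sum_tmul_single (sigmaAct k nj).toLinearMap
    (fun i => if i < s then (Del k nj ^ (p - s + i)) g else 0) (fun i => ?_)
    (if_neg (by omega))
  rw [sigmaAct_toLinearMap_eq, LinearMap.add_apply, Module.End.one_apply, hshift, add_comm]

theorem transferCov_mul_of_mem_invar {q : MvPolynomial (Idx m nj) k} (hq : q ∈ invar k nj)
    (n p s : ℕ) (g : MvPolynomial (Idx m nj) k) :
    transferCov k nj n p s (q * g) = q • transferCov k nj n p s g := by
  simp only [transferCov, Finset.smul_sum, smul_tmul', Del_pow_mul_of_mem_invar hq, smul_eq_mul,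
    mul_ite, mul_zero]

noncomputable def transferCovLinearMap (k : Type*) [CommRing k] {m : ℕ} (nj : Fin m → ℕ)
    (n p s : ℕ) : MvPolynomial (Idx m nj) k →ₗ[k] MvPolynomial (Idx m nj) k ⊗[k] (Fin n → k) :=
  ∑ i : Fin n, if (i : ℕ) < s then (TensorProduct.mk k _ _).flip (Pi.single i 1) ∘ₗ
    Del k nj ^ (p - s + (i : ℕ)) else 0

theorem transferCovLinearMap_apply (n p s : ℕ) (g : MvPolynomial (Idx m nj) k) :
    transferCovLinearMap k nj n p s g = transferCov k nj n p s g := by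
  simp only [transferCovLinearMap, transferCov, LinearMap.sum_apply]
  refine Finset.sum_congr rfl fun i _ => ?_
  split_ifs <;> simp

theorem isDecomposableCov_transferCov_mul {n p s : ℕ} (hΔ : Del k nj ^ p = 0) (hsn : s ≤ n)
    (hsp : s ≤ p) {q : MvPolynomial (Idx m nj) k} (hq : q ∈ invar k nj)
    (hq_pos : ∃ e, 0 < e ∧ q.IsHomogeneous e) (g : MvPolynomial (Idx m nj) k) :
    IsDecomposableCov k nj n (transferCov k nj n p s (q * g)) :=
  Submodule.subset_span ⟨q, _, hq, hq_pos, transferCov_isCovariant hΔ hsn hsp g,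
    transferCov_mul_of_mem_invar hq n p s g⟩

end Covariants

theorem stmt5_general (p : ℕ) (hp : p.Prime) (k : Type*) [Field k] [CharP k p]
    {m : ℕ} (nj : Fin m → ℕ) (hnj : ∀ j, 1 ≤ nj j ∧ nj j ≤ p)
    (n : ℕ)
    (γ : ℕ) (hγ : PolyGenLE k nj γ)
    (f : MvPolynomial (Idx m nj) k) (D : ℕ) (hf : MvPolynomial.IsHomogeneous f D)
    (hD : γ < D)
    (s : ℕ) (hsn : s ≤ n) (hsp : s ≤ p) :
    IsDecomposableCov k nj n (transferCov k nj n p s f) := by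
  have hΔ : Del k nj ^ p = 0 := Del_pow_eq_zero hp fun j => (hnj j).2
  rw [← homogeneousComponent_eq_self hf, ← transferCovLinearMap_apply]
  change f ∈ (Submodule.span k _).comap
    (transferCovLinearMap k nj n p s ∘ₗ homogeneousComponent D)
  refine Submodule.span_le.2 ?_ (hγ f)
  rintro _ ⟨q, g, hq, ⟨e, he, hg⟩, rfl⟩
  obtain ⟨d, rfl⟩ : ∃ d, D = d + e := ⟨D - e, by omega⟩
  rw [SetLike.mem_coe, Submodule.mem_comap, LinearMap.comp_apply,
    homogeneousComponent_add_mul_of_isHomogeneous hg, transferCovLinearMap_apply]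
  exact isDecomposableCov_transferCov_mul hΔ hsn hsp (homogeneousComponent_mem_invar hq d)
    ⟨d, by omega, homogeneousComponent_isHomogeneous d q⟩ g

/-- Proposition: transfer covariants of large degree are decomposable.
If `k[V]` is generated over `k[V]^G` by homogeneous elements of degree ≤ γ, then every
transfer covariant `Δ^k(f)w_1 + ⋯ + Δ^{p-1}(f)w_s` of degree > γ (with `f` homogeneous)
lies in `k[V]^G_+ ⋅ (k[V] ⊗ W)^G`. -/
theorem stmt5 (p : ℕ) (hp : p.Prime) (k : Type*) [Field k] [CharP k p]
    {m : ℕ} (nj : Fin m → ℕ) (hnj : ∀ j, 1 ≤ nj j ∧ nj j ≤ p)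
    (n : ℕ) (hn : 1 ≤ n) (hnp : n ≤ p)
    (γ : ℕ) (hγ : PolyGenLE k nj γ)
    (f : MvPolynomial (Idx m nj) k) (D : ℕ) (hf : MvPolynomial.IsHomogeneous f D)
    (hD : γ < D)
    (s : ℕ) (hs0 : 0 < s) (hsn : s ≤ n) (hsp : s ≤ p) :
    IsDecomposableCov k nj n (transferCov k nj n p s f) :=
  stmt5_general p hp k nj hnj n γ hγ f D hf hD s hsn hsp
end

section
/- Let G be cyclic of prime order p, k a field of characteristic p, and V_{n} the indecomposable kG-module of dimension n ≥ 2 with dual basis x_1,…,x_n of V* satisfying σ(x_i) = x_i + x_{i+1} for i < n and σ(x_n) = x_n. Let N = Π_{k=0}^{p-1} σ^k(x_1) ∈ k[V]^G be the norm of x_1. Then the coefficient of x_1^p in N is 1, and k[V] decomposes as a kG-module direct sum k[V] = N·k[V] ⊕ B, where B is the span of monomials whose degree in x_1 is less than p. -/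
open MvPolynomial TensorProduct

/-!
Each factor `σ^i(x₁)` of the norm is `x₁` plus a polynomial free of `x₁`, because `σ` never
creates `x₁`; hence `N = x₁^p + r` with `r` of `x₁`-degree `< p`. Dividing by a polynomial that is
monic in `x₁` in this sense leaves a remainder of `x₁`-degree `< p`, and no nonzero multiple of it
has `x₁`-degree `< p`: this is `k[V] = N·k[V] ⊕ B`. The summand `B` is `σ`-stable because `σ` does
not raise the `x₁`-degree, and `N·k[V]` because `σ N = N`, which holds since `σ^p x₁ = x₁`: in
characteristic `p`, `σ^p = (1 + Δ)^p = 1 + Δ^p`, and `Δ^p x₁ = x_{p+1} = 0` as `n ≤ p`.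
-/

open Finset

namespace MvPolynomial

variable {R σ τ : Type*} [CommRing R]

theorem mem_restrictSupport_lt_iff {v : σ} {p : ℕ} (hp : 0 < p) {f : MvPolynomial σ R} :
    f ∈ restrictSupport R {s | s v < p} ↔ degreeOf v f < p :=
  (degreeOf_lt_iff hp).symm

theorem degreeOf_map_le_of_degreeOf_map_X (φ : MvPolynomial σ R →ₐ[R] MvPolynomial τ R)
    {v : σ} {u : τ} (hv : degreeOf u (φ (X v)) ≤ 1) (hw : ∀ w ≠ v, degreeOf u (φ (X w)) = 0)
    (f : MvPolynomial σ R) : degreeOf u (φ f) ≤ degreeOf v f := by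
  classical
  conv_lhs => rw [f.as_sum, map_sum]
  refine (degreeOf_sum_le _ _ _).trans (Finset.sup_le fun s hs => ?_)
  have hterm (w : σ) : degreeOf u (φ (X w) ^ s w) ≤ if w = v then s v else 0 := by
    refine (degreeOf_pow_le _ _ _).trans ?_
    split_ifs with h
    · subst h; simpa using Nat.mul_le_mul_left (s w) hv
    · simp [hw w h]
  calc degreeOf u (φ (monomial s (coeff s f)))
      ≤ ∑ w ∈ s.support, degreeOf u (φ (X w) ^ s w) := by
        rw [monomial_eq, map_mul, algHom_C, map_finsuppProd]
        exact (degreeOf_C_mul_le _ _ _).trans ((degreeOf_prod_le _ _ _).trans (by simp [map_pow]))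
    _ ≤ ∑ w ∈ s.support, if w = v then s v else 0 := sum_le_sum fun w _ => hterm w
    _ ≤ s v := by rw [sum_ite_eq']; split_ifs <;> simp
    _ ≤ degreeOf v f := monomial_le_degreeOf v hs

theorem degreeOf_X_pow_le (v : σ) (m : ℕ) : degreeOf v (X v ^ m : MvPolynomial σ R) ≤ m := by
  rcases subsingleton_or_nontrivial R with _ | _
  · simp [Subsingleton.elim (X v ^ m : MvPolynomial σ R) 0]
  · simp

theorem degreeOf_prod_range_sub_X_pow_lt {v : σ} {F : ℕ → MvPolynomial σ R}
    (hF : ∀ i, degreeOf v (F i - X v) = 0) {m : ℕ} (hm : 0 < m) :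
    degreeOf v (∏ i ∈ range m, F i - X v ^ m) < m := by
  obtain ⟨m, rfl⟩ := Nat.exists_eq_add_one_of_ne_zero hm.ne'
  rw [Nat.lt_succ_iff]
  clear hm
  induction m with
  | zero => simp [hF 0]
  | succ m ih =>
    set D := ∏ i ∈ range (m + 1), F i - X v ^ (m + 1)
    have hsplit : ∏ i ∈ range (m + 2), F i - X v ^ (m + 2)
        = D * X v + D * (F (m + 1) - X v) + X v ^ (m + 1) * (F (m + 1) - X v) := by
      rw [prod_range_succ]; ring
    have h1 := (degreeOf_mul_X_self v D).trans (Nat.add_le_add_right ih 1)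
    have h2 := (degreeOf_mul_le v D _).trans (Nat.add_le_add ih (hF (m + 1)).le)
    have h3 := (degreeOf_mul_le v (X v ^ (m + 1)) _).trans
      (Nat.add_le_add (degreeOf_X_pow_le v (m + 1)) (hF (m + 1)).le)
    rw [hsplit]
    refine (degreeOf_add_le _ _ _).trans (max_le ((degreeOf_add_le _ _ _).trans ?_) ?_) <;>
      grind

section MonicIn

variable {v : σ} {p : ℕ} {N : MvPolynomial σ R}

theorem degreeOf_modMonomial_single_lt (hp : 0 < p) (f : MvPolynomial σ R) :
    degreeOf v (modMonomial f (Finsupp.single v p)) < p := by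
  refine (degreeOf_lt_iff hp).2 fun s hs => ?_
  by_contra! h
  exact mem_support_iff.1 hs (coeff_modMonomial_of_le _ (Finsupp.single_le_iff.2 h))

theorem degreeOf_divMonomial_single_le (f : MvPolynomial σ R) :
    degreeOf v (divMonomial f (Finsupp.single v p)) ≤ degreeOf v f - p := by
  refine degreeOf_le_iff.2 fun s hs => ?_
  have := monomial_le_degreeOf v (f := f) (by simpa [mem_support_iff] using hs)
  simp only [Finsupp.add_apply, Finsupp.single_eq_same] at this
  omega

theorem exists_degreeOf_sub_mul_lt (hN : degreeOf v (N - X v ^ p) < p)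
    (f : MvPolynomial σ R) : ∃ q, degreeOf v (f - N * q) < p := by
  induction hd : degreeOf v f using Nat.strong_induction_on generalizing f with
  | _ d ih =>
  by_cases hdp : d < p
  · exact ⟨0, by simpa [hd] using hdp⟩
  set q := divMonomial f (Finsupp.single v p)
  have hstep : f - N * q = modMonomial f (Finsupp.single v p) - (N - X v ^ p) * q := by
    conv_lhs => rw [← modMonomial_add_divMonomial f (Finsupp.single v p)]
    rw [← X_pow_eq_monomial]; ring
  have hlt : degreeOf v (f - N * q) < d := by
    rw [hstep]
    refine (degreeOf_sub_le _ _ _).trans_lt (max_lt ?_ ?_)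
    · exact (degreeOf_modMonomial_single_lt (by omega) f).trans_le (by omega)
    · have hq : degreeOf v q ≤ degreeOf v f - p := degreeOf_divMonomial_single_le f
      have := degreeOf_mul_le v (N - X v ^ p) q
      omega
  obtain ⟨q', hq'⟩ := ih _ hlt _ rfl
  exact ⟨q + q', by rwa [mul_add, ← sub_sub]⟩

theorem coeff_single_eq_one_of_degreeOf_sub_X_pow_lt (hN : degreeOf v (N - X v ^ p) < p) :
    coeff (Finsupp.single v p) N = 1 := by
  classical
  have hr : coeff (Finsupp.single v p) (N - X v ^ p) = 0 := by
    by_contra h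
    simpa using monomial_le_degreeOf v (mem_support_iff.2 h) |>.trans_lt hN
  rw [coeff_sub, X_pow_eq_monomial, coeff_monomial, if_pos rfl, sub_eq_zero] at hr
  exact hr

theorem degreeOf_eq_of_degreeOf_sub_X_pow_lt [Nontrivial R]
    (hN : degreeOf v (N - X v ^ p) < p) : degreeOf v N = p := by
  have := degreeOf_add_eq_of_degreeOf_lt (i := v) (p := X v ^ p) (q := N - X v ^ p)
    (by simpa using hN)
  rwa [add_sub_cancel, degreeOf_X_self_pow] at this

theorem isCompl_range_mulLeft_restrictSupport [IsDomain R]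
    (hN : degreeOf v (N - X v ^ p) < p) :
    IsCompl (LinearMap.range (LinearMap.mulLeft R N)) (restrictSupport R {s | s v < p}) := by
  have hp : 0 < p := (Nat.zero_le _).trans_lt hN
  have hdeg := degreeOf_eq_of_degreeOf_sub_X_pow_lt hN
  refine ⟨Submodule.disjoint_def.2 ?_, codisjoint_iff.2 (eq_top_iff.2 fun f _ => ?_)⟩
  · rintro _ ⟨g, rfl⟩ hg
    rw [LinearMap.mulLeft_apply, mem_restrictSupport_lt_iff hp] at hg
    rw [LinearMap.mulLeft_apply]
    by_contra hNg
    have hN0 : N ≠ 0 := by rintro rfl; simp at hdeg; omega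
    rw [degreeOf_mul_eq hN0 (right_ne_zero_of_mul hNg), hdeg] at hg
    omega
  · obtain ⟨q, hq⟩ := exists_degreeOf_sub_mul_lt hN f
    rw [← add_sub_cancel (N * q) f]
    exact Submodule.add_mem_sup ⟨q, rfl⟩ ((mem_restrictSupport_lt_iff hp).2 hq)

end MonicIn

end MvPolynomial

section Sigma

variable {k : Type*} {m : ℕ} {nj : Fin m → ℕ}

noncomputable def xVar (k : Type*) [CommRing k] {m : ℕ} (nj : Fin m → ℕ) (b : Fin m) (i : ℕ) :
    MvPolynomial (Idx m nj) k :=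
  if h : i < nj b then X ⟨b, ⟨i, h⟩⟩ else 0

theorem sigmaAct_X_s6 [CommRing k] (w : Idx m nj) :
    sigmaAct k nj (X w) = X w + xVar k nj w.1 (w.2 + 1) :=
  aeval_X _ w

theorem Del_xVar [CommRing k] (b : Fin m) (i : ℕ) :
    Del k nj (xVar k nj b i) = xVar k nj b (i + 1) := by
  by_cases h : i < nj b
  · simp [Del, xVar, dif_pos h, sigmaAct_X_s6]
  · simp [Del, xVar, h, show ¬ i + 1 < nj b by omega]

theorem Del_pow_xVar [CommRing k] (b : Fin m) (i j : ℕ) :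
    (Del k nj ^ j) (xVar k nj b i) = xVar k nj b (i + j) := by
  induction j with
  | zero => rfl
  | succ j ih => rw [pow_succ', Module.End.mul_apply, ih, Del_xVar, add_assoc]

theorem sigmaAct_iterate_xVar_zero [Field k] {p : ℕ} [Fact p.Prime] [CharP k p] {b : Fin m}
    (hb : nj b ≤ p) : (sigmaAct k nj)^[p] (xVar k nj b 0) = xVar k nj b 0 := by
  have : CharP (Module.End k (MvPolynomial (Idx m nj) k)) p := charP_of_injective_algebraMap' k p
  have hσ : (sigmaAct k nj).toLinearMap = Del k nj + 1 := by
    rw [Del, Module.End.one_eq_id, sub_add_cancel]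
  rw [← AlgHom.coe_toLinearMap, ← Module.End.pow_apply, hσ,
    add_pow_char_of_commute _ (Commute.one_right _), one_pow, LinearMap.add_apply,
    Del_pow_xVar, Module.End.one_apply, zero_add, xVar, dif_neg (by omega), zero_add]

theorem sigmaAct_normJ [Field k] {p : ℕ} [Fact p.Prime] [CharP k p] {b : Fin m}
    (h0 : 0 < nj b) (hb : nj b ≤ p) :
    sigmaAct k nj (normJ k nj p b h0) = normJ k nj p b h0 := by
  set F : ℕ → MvPolynomial (Idx m nj) k := fun i => (sigmaAct k nj)^[i] (X ⟨b, ⟨0, h0⟩⟩)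
  have hF : F p = F 0 := by
    simpa [F, xVar, dif_pos h0] using sigmaAct_iterate_xVar_zero (k := k) hb
  have hshift : sigmaAct k nj (normJ k nj p b h0) * F 0 = normJ k nj p b h0 * F 0 := by
    rw [normJ, map_prod]
    calc (∏ i ∈ range p, sigmaAct k nj (F i)) * F 0 = ∏ i ∈ range (p + 1), F i := by
          rw [prod_range_succ']; simp only [F, Function.iterate_succ_apply']
      _ = (∏ i ∈ range p, F i) * F 0 := by rw [prod_range_succ, hF]
  exact mul_right_cancel₀ (X_ne_zero _) hshift

section Degree

variable [CommRing k] {b : Fin m} (h0 : 0 < nj b)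

theorem degreeOf_xVar_succ (b' : Fin m) (i : ℕ) :
    degreeOf ⟨b, ⟨0, h0⟩⟩ (xVar k nj b' (i + 1)) = 0 := by
  unfold xVar
  split_ifs
  · exact degreeOf_X_of_ne fun h => by simpa using congrArg (fun w : Idx m nj => (w.2 : ℕ)) h
  · exact degreeOf_zero _

theorem degreeOf_sigmaAct_le (f : MvPolynomial (Idx m nj) k) :
    degreeOf ⟨b, ⟨0, h0⟩⟩ (sigmaAct k nj f) ≤ degreeOf ⟨b, ⟨0, h0⟩⟩ f := by
  refine degreeOf_map_le_of_degreeOf_map_X _ ?_ (fun w hw => ?_) f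
  · rw [sigmaAct_X_s6]
    refine (degreeOf_add_le _ _ _).trans
      (max_le ?_ ((degreeOf_xVar_succ h0 _ _).trans_le zero_le_one))
    simpa using degreeOf_X_pow_le (R := k) (⟨b, ⟨0, h0⟩⟩ : Idx m nj) 1
  · rw [sigmaAct_X_s6, ← Nat.le_zero]
    exact (degreeOf_add_le _ _ _).trans
      (max_le (degreeOf_X_of_ne hw.symm).le (degreeOf_xVar_succ h0 _ _).le)

theorem degreeOf_iterate_sigmaAct_X_sub_X (i : ℕ) :
    degreeOf ⟨b, ⟨0, h0⟩⟩ ((sigmaAct k nj)^[i] (X ⟨b, ⟨0, h0⟩⟩) - X ⟨b, ⟨0, h0⟩⟩) = 0 := by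
  induction i with
  | zero => simp
  | succ i ih =>
    have hsplit : (sigmaAct k nj)^[i + 1] (X ⟨b, ⟨0, h0⟩⟩) - X ⟨b, ⟨0, h0⟩⟩
        = sigmaAct k nj ((sigmaAct k nj)^[i] (X ⟨b, ⟨0, h0⟩⟩) - X ⟨b, ⟨0, h0⟩⟩)
          + xVar k nj b (0 + 1) := by
      rw [Function.iterate_succ_apply', map_sub, sigmaAct_X_s6]; ring
    rw [hsplit, ← Nat.le_zero]
    refine (degreeOf_add_le _ _ _).trans (max_le ?_ (degreeOf_xVar_succ h0 _ _).le)
    exact (degreeOf_sigmaAct_le h0 _).trans ih.le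

theorem degreeOf_normJ_sub_X_pow_lt {p : ℕ} (hp : 0 < p) :
    degreeOf ⟨b, ⟨0, h0⟩⟩ (normJ k nj p b h0 - X ⟨b, ⟨0, h0⟩⟩ ^ p) < p :=
  degreeOf_prod_range_sub_X_pow_lt (degreeOf_iterate_sigmaAct_X_sub_X h0) hp

end Degree

end Sigma

/-- For the indecomposable module `V_n` (n ≥ 2) with variables
`x_1, …, x_n` and norm `N = ∏_{k=0}^{p-1} σ^k(x_1)`: the coefficient of `x_1^p` in
`N` is `1`, and `k[V] = N·k[V] ⊕ B` as `kG`-modules, where `B` is the span of the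
monomials of `x_1`-degree `< p`. -/
theorem stmt6 (p : ℕ) (hp : p.Prime) (k : Type*) [Field k] [CharP k p]
    (n : ℕ) (hn : 2 ≤ n) (hnp : n ≤ p) :
    letI nj : Fin 1 → ℕ := fun _ => n
    let x1 : Idx 1 nj := ⟨0, ⟨0, (by omega : 0 < n)⟩⟩
    let N : MvPolynomial (Idx 1 nj) k := normJ k nj p 0 (by omega : 0 < n)
    let NR : Submodule k (MvPolynomial (Idx 1 nj) k) :=
      LinearMap.range (LinearMap.mulLeft k N)
    let B : Submodule k (MvPolynomial (Idx 1 nj) k) :=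
      Submodule.span k {g | ∃ s : Idx 1 nj →₀ ℕ, s x1 < p ∧ g = MvPolynomial.monomial s 1}
    MvPolynomial.coeff (Finsupp.single x1 p) N = 1 ∧
    IsCompl NR B ∧
    (∀ g ∈ NR, sigmaAct k nj g ∈ NR) ∧
    (∀ g ∈ B, sigmaAct k nj g ∈ B) := by
  intro x1 N NR B
  have : Fact p.Prime := ⟨hp⟩
  have h0 : 0 < n := by omega
  have hN : degreeOf x1 (N - X x1 ^ p) < p := degreeOf_normJ_sub_X_pow_lt h0 hp.pos
  have hB : B = restrictSupport k {s | s x1 < p} := by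
    simp only [B, restrictSupport_eq_span]
    congr 1
    ext g
    simp [eq_comm]
  refine ⟨coeff_single_eq_one_of_degreeOf_sub_X_pow_lt hN,
    hB ▸ isCompl_range_mulLeft_restrictSupport hN, ?_, ?_⟩
  · rintro _ ⟨f, rfl⟩
    refine ⟨sigmaAct k _ f, ?_⟩
    rw [LinearMap.mulLeft_apply, LinearMap.mulLeft_apply, map_mul,
      sigmaAct_normJ (nj := fun _ => n) h0 hnp]
  · simp only [hB, mem_restrictSupport_lt_iff hp.pos]
    exact fun g hg => (degreeOf_sigmaAct_le h0 g).trans_lt hg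
end

section
/- Let G be cyclic of order p, k of characteristic p, V a kG-module, and N ∈ k[V]^G a norm as above, so that multiplication by N maps k[V]_d isomorphically (as kG-modules) onto a direct summand of k[V]_{d+p}. If q ∈ k[V]^G and qN lies in the image of Δ^{k-1} : k[V] → k[V], then q also lies in the image of Δ^{k-1}. -/
open MvPolynomial TensorProduct

/-! Write a preimage of `qN` under `Δ^K` as `N g + c` along `k[V] = N k[V] ⊕ C`. Since `Δ`
commutes with multiplication by the invariant `N` and preserves `C`, the element
`N (q - Δ^K g) = Δ^K c` lies in both summands, so it vanishes, and `q = Δ^K g` because `N ≠ 0`.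
That `N ≠ 0` is seen by the evaluation sending the first variable of each block to `1` and all
others to `0`: it is `σ`-invariant, so it sends `N` to `1`. -/

namespace Module.End

lemma pow_mem_invtSubmodule {R M : Type*} [Semiring R] [AddCommMonoid M] [Module R M]
    {f : End R M} {p : Submodule R M} (hp : p ∈ f.invtSubmodule) (n : ℕ) :
    p ∈ (f ^ n).invtSubmodule := by
  induction n with
  | zero => simp
  | succ n ih => rw [pow_succ]; exact invtSubmodule.comp _ ih hp

lemma mem_range_pow_of_apply_mem_range_pow {R M : Type*} [Semiring R] [AddCommGroup M] [Module R M]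
    {D φ : End R M} (hφ : Function.Injective φ)
    (hcomm : Commute φ D) {C : Submodule R M} (hC : IsCompl (LinearMap.range φ) C)
    (hCD : C ∈ D.invtSubmodule) (n : ℕ) {x : M} (hx : φ x ∈ LinearMap.range (D ^ n)) :
    x ∈ LinearMap.range (D ^ n) := by
  obtain ⟨f, hf⟩ := hx
  obtain ⟨_, c, ⟨g, rfl⟩, hc, rfl⟩ := Submodule.codisjoint_iff_exists_add_eq.mp hC.codisjoint f
  have hcomm_pow : (D ^ n) (φ g) = φ ((D ^ n) g) := by
    rw [← Module.End.mul_apply, ← (hcomm.pow_right n).eq, Module.End.mul_apply]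
  have hmem : φ (x - (D ^ n) g) ∈ LinearMap.range φ ⊓ C := by
    refine ⟨LinearMap.mem_range_self φ _, ?_⟩
    rw [map_sub, ← hf, map_add, hcomm_pow, add_sub_cancel_left]
    exact pow_mem_invtSubmodule hCD n hc
  rw [hC.inf_eq_bot, Submodule.mem_bot, ← map_zero φ] at hmem
  exact ⟨g, (sub_eq_zero.mp (hφ hmem)).symm⟩

end Module.End

section

variable (k : Type*) [CommRing k] {m : ℕ} (nj : Fin m → ℕ)

lemma commute_mulLeft_del {N : MvPolynomial (Idx m nj) k} (hN : N ∈ invar k nj) :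
    Commute (LinearMap.mulLeft k N) (Del k nj) := by
  have hσN : sigmaAct k nj N = N := hN
  refine LinearMap.ext fun x => ?_
  simp [Del, hσN, mul_sub]

lemma mem_invtSubmodule_del {C : Submodule k (MvPolynomial (Idx m nj) k)}
    (hC : ∀ g ∈ C, sigmaAct k nj g ∈ C) : C ∈ Module.End.invtSubmodule (Del k nj) :=
  fun g hg => C.sub_mem (hC g hg) hg

noncomputable def evalFirst : MvPolynomial (Idx m nj) k →ₐ[k] k :=
  aeval fun v => if v.2.1 = 0 then 1 else 0

lemma evalFirst_comp_sigmaAct : (evalFirst k nj).comp (sigmaAct k nj) = evalFirst k nj := by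
  refine MvPolynomial.algHom_ext fun v => ?_
  simp only [AlgHom.comp_apply, sigmaAct, evalFirst, aeval_X, map_add]
  split_ifs <;> simp [aeval_X]

lemma evalFirst_sigmaAct_iterate (f : MvPolynomial (Idx m nj) k) (i : ℕ) :
    evalFirst k nj ((sigmaAct k nj)^[i] f) = evalFirst k nj f := by
  induction i with
  | zero => rfl
  | succ i ih =>
    rw [Function.iterate_succ_apply', ← AlgHom.comp_apply, evalFirst_comp_sigmaAct, ih]

lemma evalFirst_normJ (p : ℕ) (j : Fin m) (h0 : 0 < nj j) :
    evalFirst k nj (normJ k nj p j h0) = 1 := by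
  rw [normJ, map_prod]
  refine Finset.prod_eq_one fun i _ => ?_
  rw [evalFirst_sigmaAct_iterate]
  simp [evalFirst]

lemma normJ_ne_zero [Nontrivial k] (p : ℕ) (j : Fin m) (h0 : 0 < nj j) :
    normJ k nj p j h0 ≠ 0 := fun h => by
  simpa [h] using evalFirst_normJ k nj p j h0

end

/-- Let `N = N_j` be a norm, so that multiplication by `N` is an
injective `kG`-map whose image is a `kG`-direct summand of `k[V]` (it admits a
`G`-stable complement `C`). If `q ∈ k[V]^G` and `qN` lies in the image of
`Δ^{k-1}`, then so does `q`. -/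
theorem stmt7 (p : ℕ) (k : Type*) [Field k]
    {m : ℕ} (nj : Fin m → ℕ) (hnj : ∀ j, 1 ≤ nj j ∧ nj j ≤ p)
    (j : Fin m)
    (N : MvPolynomial (Idx m nj) k)
    (hN : N = normJ k nj p j (by have := (hnj j).1; omega))
    (hNinv : N ∈ invar k nj)
    (C : Submodule k (MvPolynomial (Idx m nj) k))
    (hC : IsCompl (LinearMap.range (LinearMap.mulLeft k N)) C)
    (hCstable : ∀ g ∈ C, sigmaAct k nj g ∈ C)
    (q : MvPolynomial (Idx m nj) k)
    (K : ℕ) (hqN : q * N ∈ LinearMap.range ((Del k nj) ^ K)) :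
    q ∈ LinearMap.range ((Del k nj) ^ K) := by
  have hNne : N ≠ 0 := hN ▸ normJ_ne_zero k nj p j _
  refine Module.End.mem_range_pow_of_apply_mem_range_pow (mul_right_injective₀ hNne)
    (commute_mulLeft_del k nj hNinv) hC (mem_invtSubmodule_del k nj hCstable) K ?_
  simpa [mul_comm] using hqN
end
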